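/- arXiv:2501.09616 — 2 statements merged into one kernel-verified Lean document; each statement's English description precedes it below -/
import Mathlib

section
/- Let A(z) = I + A_1 z + ... + A_q z^q and B(z) = B_0 + B_1 z + ... + B_r z^r be polynomial matrices of sizes m×m and m×l respectively, with A(z) having invertible leading constant term I (hence invertible as a matrix over rational functions). If rank([A_q B_r]) < m, then there exists a nonzero m×m constant matrix D with D·A_q = 0 and D·B_r = 0 such that the polynomial matrices Ã(z) := (I + Dz)A(z) and B̃(z) := (I + Dz)B(z) satisfy: Ã has degree at most q, B̃ has degree at most r, Ã(0) = I, (Ã, B̃) ≠ (A, B), and Ã(z)^{-1}B̃(z) = A(z)^{-1}B(z) as rational function matrices. -/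
/-!
The rank condition gives a nonzero row vector `v` with `v [A_q B_r] = 0`; take `D` with every row
equal to `v`. In `(I + Dz) P` the coefficient of `z^(k+1)` is `P_(k+1) + D P_k`, so multiplying by
`I + Dz` raises no degree, and comparing `z¹`-coefficients shows `(I + Dz) A ≠ A` because
`D A(0) = D ≠ 0`. Finally `I + Dz` equals `I` at `z = 0`, so its determinant is a nonzero
polynomial and the factor cancels in `Ã⁻¹ B̃`.
-/

open Polynomial Matrix

/-- The embedding of real polynomials into real rational functions. -/
noncomputable def φR : Polynomial ℝ → RatFunc ℝ := algebraMap (Polynomial ℝ) (RatFunc ℝ)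

namespace Matrix

theorem exists_vecMul_eq_zero_of_rank_lt {K m n : Type*} [Field K] [Fintype m] [Fintype n]
    {M : Matrix m n K} (h : M.rank < Fintype.card m) : ∃ v ≠ 0, v ᵥ* M = 0 := by
  have hker : LinearMap.ker Mᵀ.mulVecLin ≠ ⊥ := by
    intro hbot
    have := LinearMap.finrank_range_add_finrank_ker Mᵀ.mulVecLin
    rw [hbot, finrank_bot, add_zero, Module.finrank_fintype_fun_eq_card] at this
    exact h.ne (M.rank_transpose ▸ this)
  obtain ⟨v, hv, hv0⟩ := Submodule.exists_mem_ne_zero_of_ne_bot hker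
  exact ⟨v, hv0, by rwa [LinearMap.mem_ker, mulVecLin_apply, mulVec_transpose] at hv⟩

theorem exists_ne_zero_mul_eq_zero_of_rank_lt {K m n : Type*} [Field K] [Fintype m] [Fintype n]
    {M : Matrix m n K} (h : M.rank < Fintype.card m) :
    ∃ D : Matrix m m K, D ≠ 0 ∧ D * M = 0 := by
  obtain ⟨v, hv0, hv⟩ := exists_vecMul_eq_zero_of_rank_lt h
  obtain ⟨i, hi⟩ := Function.ne_iff.mp hv0
  refine ⟨replicateRow m v, fun hD => hi (congrFun (congrFun hD i) i), ?_⟩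
  rw [← replicateRow_vecMul, hv]
  rfl

theorem inv_mul_mul_cancel_left_of_isUnit_det {R m n : Type*} [CommRing R] [Fintype m]
    [DecidableEq m] {U : Matrix m m R} (hU : IsUnit U.det) (A : Matrix m m R) (B : Matrix m n R) :
    (U * A)⁻¹ * (U * B) = A⁻¹ * B := by
  rw [mul_inv_rev, Matrix.mul_assoc, ← Matrix.mul_assoc U⁻¹, nonsing_inv_mul _ hU, Matrix.one_mul]

end Matrix

section PolynomialMatrix

variable {R : Type*} {m n : Type*}

theorem map_coeff_eq_zero_of_natDegree_le [Semiring R] {P : Matrix m n R[X]} {q k : ℕ}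
    (hP : ∀ i j, (P i j).natDegree ≤ q) (hk : q < k) : P.map (fun p => p.coeff k) = 0 := by
  ext i j
  exact coeff_eq_zero_of_natDegree_lt ((hP i j).trans_lt hk)

variable [Fintype m] [DecidableEq m]

theorem map_coeff_succ_one_add_X_smul_mul [CommSemiring R] (D : Matrix m m R)
    (P : Matrix m n R[X]) (k : ℕ) :
    (((1 : Matrix m m R[X]) + (X : R[X]) • D.map C) * P).map (fun p => p.coeff (k + 1)) =
      P.map (fun p => p.coeff (k + 1)) + D * P.map (fun p => p.coeff k) := by
  rw [Matrix.add_mul, Matrix.one_mul, Matrix.smul_mul]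
  ext i j
  simp only [map_apply, Matrix.add_apply, Matrix.smul_apply, smul_eq_mul, coeff_add, coeff_X_mul,
    mul_apply, finsetSum_coeff, coeff_C_mul]

theorem natDegree_one_add_X_smul_mul_le [CommSemiring R] {D : Matrix m m R}
    {P : Matrix m n R[X]} {q : ℕ} (hP : ∀ i j, (P i j).natDegree ≤ q)
    (hD : D * P.map (fun p => p.coeff q) = 0) (i : m) (j : n) :
    ((((1 : Matrix m m R[X]) + (X : R[X]) • D.map C) * P) i j).natDegree ≤ q := by
  refine natDegree_le_iff_coeff_eq_zero.mpr fun k hk => ?_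
  obtain ⟨k, rfl⟩ : ∃ k', k = k' + 1 := ⟨k - 1, by omega⟩
  have hcoeff : (((1 : Matrix m m R[X]) + (X : R[X]) • D.map C) * P).map
      (fun p => p.coeff (k + 1)) = 0 := by
    rw [map_coeff_succ_one_add_X_smul_mul, map_coeff_eq_zero_of_natDegree_le hP hk, zero_add]
    rcases (Nat.lt_succ_iff.mp hk).eq_or_lt with rfl | hqk
    · exact hD
    · rw [map_coeff_eq_zero_of_natDegree_le hP hqk, Matrix.mul_zero]
  exact congrFun (congrFun hcoeff i) j

theorem map_eval_zero_one_add_X_smul_mul [CommSemiring R] (D : Matrix m m R)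
    (P : Matrix m n R[X]) :
    (((1 : Matrix m m R[X]) + (X : R[X]) • D.map C) * P).map (eval 0) = P.map (eval 0) := by
  rw [Matrix.add_mul, Matrix.one_mul, Matrix.smul_mul]
  ext i j
  simp only [map_apply, Matrix.add_apply, Matrix.smul_apply, smul_eq_mul, eval_add, eval_mul,
    eval_X, zero_mul, add_zero]

theorem det_ne_zero_of_map_eval_zero_eq_one [CommRing R] [Nontrivial R] {P : Matrix m m R[X]}
    (hP : P.map (eval 0) = 1) : P.det ≠ 0 := by
  intro h
  have := RingHom.map_det (evalRingHom (0 : R)) P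
  rw [h, RingHom.mapMatrix_apply, coe_evalRingHom, hP, det_one, eval_zero] at this
  exact zero_ne_one this

theorem one_add_X_smul_mul_ne_self [CommRing R] {D : Matrix m m R} (hD : D ≠ 0)
    {P : Matrix m m R[X]} (hP : P.map (eval 0) = 1) :
    ((1 : Matrix m m R[X]) + (X : R[X]) • D.map C) * P ≠ P := by
  intro h
  have hcoeff := congrArg (Matrix.map · fun p => p.coeff 1) h
  simp only [zero_add, map_coeff_succ_one_add_X_smul_mul, add_eq_left] at hcoeff
  have hP0 : P.map (fun p => p.coeff 0) = 1 := by simpa only [coeff_zero_eq_eval_zero] using hP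
  rw [hP0, Matrix.mul_one] at hcoeff
  exact hD hcoeff

theorem isUnit_det_map_algebraMap_ratFunc {K : Type*} [Field K] {P : Matrix m m K[X]}
    (hP : P.map (eval 0) = 1) : IsUnit (P.map (algebraMap K[X] (RatFunc K))).det := by
  rw [← RingHom.mapMatrix_apply, ← RingHom.map_det, isUnit_iff_ne_zero,
    map_ne_zero_iff _ (IsFractionRing.injective K[X] (RatFunc K))]
  exact det_ne_zero_of_map_eval_zero_eq_one hP

end PolynomialMatrix

/-- Necessity of the rank condition for identifiability: if `rank [A_q B_r] < m`, there is
a nonzero `D` with `D A_q = 0`, `D B_r = 0` such that `Ã = (I + Dz)A`, `B̃ = (I + Dz)B`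
have degrees at most `q`, `r`, `Ã(0) = I`, `(Ã, B̃) ≠ (A, B)`, and
`Ã⁻¹ B̃ = A⁻¹ B` over rational functions. -/
theorem stmt_4 (m l q r : ℕ)
    (A : Matrix (Fin m) (Fin m) (Polynomial ℝ)) (B : Matrix (Fin m) (Fin l) (Polynomial ℝ))
    (hA0 : A.map (fun p => p.eval 0) = 1)
    (hAdeg : ∀ i j, (A i j).natDegree ≤ q) (hBdeg : ∀ i j, (B i j).natDegree ≤ r)
    (hrank : (Matrix.fromCols (A.map fun p => p.coeff q) (B.map fun p => p.coeff r)).rank < m) :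
    ∃ (D : Matrix (Fin m) (Fin m) ℝ) (AT : Matrix (Fin m) (Fin m) (Polynomial ℝ))
      (BT : Matrix (Fin m) (Fin l) (Polynomial ℝ)),
      D ≠ 0 ∧
      D * (A.map fun p => p.coeff q) = 0 ∧
      D * (B.map fun p => p.coeff r) = 0 ∧
      AT = ((1 : Matrix (Fin m) (Fin m) (Polynomial ℝ)) + (X : Polynomial ℝ) • D.map C) * A ∧
      BT = ((1 : Matrix (Fin m) (Fin m) (Polynomial ℝ)) + (X : Polynomial ℝ) • D.map C) * B ∧
      (∀ i j, (AT i j).natDegree ≤ q) ∧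
      (∀ i j, (BT i j).natDegree ≤ r) ∧
      AT.map (fun p => p.eval 0) = 1 ∧
      (AT, BT) ≠ (A, B) ∧
      (AT.map φR)⁻¹ * BT.map φR = (A.map φR)⁻¹ * B.map φR := by
  obtain ⟨D, hD0, hDM⟩ := exists_ne_zero_mul_eq_zero_of_rank_lt (by rwa [Fintype.card_fin])
  rw [mul_fromCols, ← fromCols_zero, fromCols_ext_iff] at hDM
  obtain ⟨hDA, hDB⟩ := hDM
  set U : Matrix (Fin m) (Fin m) ℝ[X] := 1 + (X : ℝ[X]) • D.map C
  have hU0 : U.map (eval 0) = 1 := by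
    simpa only [Matrix.mul_one, Matrix.map_one _ eval_zero eval_one] using
      map_eval_zero_one_add_X_smul_mul D (1 : Matrix (Fin m) (Fin m) ℝ[X])
  refine ⟨D, U * A, U * B, hD0, hDA, hDB, rfl, rfl, natDegree_one_add_X_smul_mul_le hAdeg hDA,
    natDegree_one_add_X_smul_mul_le hBdeg hDB, by rw [map_eval_zero_one_add_X_smul_mul, hA0],
    fun h => one_add_X_smul_mul_ne_self hD0 hA0 (congrArg Prod.fst h), ?_⟩
  rw [φR, Matrix.map_mul, Matrix.map_mul,
    inv_mul_mul_cancel_left_of_isUnit_det (isUnit_det_map_algebraMap_ratFunc hU0)]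
end

section
/- Let A(z) = I + A_1 z + ... + A_q z^q (A_q ≠ 0) and B(z) = B_0 + ... + B_r z^r (B_r ≠ 0) be left coprime polynomial matrices (m×m and m×l) with rank([A_q B_r]) = m. If Ã(z), B̃(z) are polynomial matrices of degrees at most q and r respectively, with Ã(0) = I, Ã invertible over rational functions, and Ã(z)^{-1}B̃(z) = A(z)^{-1}B(z), then Ã(z) = A(z) and B̃(z) = B(z). -/
/-! With `A M₁ + B M₂ = I` and `Ã⁻¹ B̃ = A⁻¹ B`, the polynomial matrix `U = Ã M₁ + B̃ M₂` equals
`Ã A⁻¹`, so `Ã = U A` and `B̃ = U B`; evaluating at `0` gives `U(0) = I`. If `U` had degree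
`s > 0`, the coefficients of `z ^ (s + q)` and `z ^ (s + r)` in `U A` and `U B` would give
`U_s [A_q B_r] = 0`, because `Ã` and `B̃` have degrees at most `q` and `r`. As `[A_q B_r]` has full
row rank, `U_s = 0`; hence `U` is constant, and `U = I`. -/

open Polynomial Matrix

namespace Matrix

variable {m n k : Type*}

theorem eq_zero_of_mul_eq_zero_of_rank_eq_card {K : Type*} [Field K] [Fintype n] [Fintype k]
    {X : Matrix m n K} {M : Matrix n k K} (hXM : X * M = 0) (hM : M.rank = Fintype.card n) :
    X = 0 := by
  have hrows : LinearIndependent K M.row :=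
    linearIndependent_iff_card_eq_finrank_span.mpr <| by
      rw [Set.finrank, ← rank_eq_finrank_span_row, hM]
  ext i j
  have hi : X i ᵥ* M = 0 ᵥ* M := by
    rw [zero_vecMul]
    exact congrFun hXM i
  exact congrFun (vecMul_injective_iff.mpr hrows hi) j

theorem det_ne_zero_of_map_eval_zero_eq_one {R : Type*} [CommRing R] [Nontrivial R]
    [Fintype n] [DecidableEq n] {M : Matrix n n R[X]} (hM : M.map (eval 0) = 1) : M.det ≠ 0 := by
  intro h
  have h0 := (evalRingHom (0 : R)).map_det M
  rw [h, map_zero, RingHom.mapMatrix_apply, coe_evalRingHom, hM, det_one] at h0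
  exact zero_ne_one h0

theorem isUnit_det_map_algebraMap_of_map_eval_zero_eq_one {R K : Type*} [CommRing R]
    [IsDomain R] [Field K] [Algebra R[X] K] [IsFractionRing R[X] K] [Fintype n] [DecidableEq n]
    {M : Matrix n n R[X]} (hM : M.map (eval 0) = 1) : IsUnit (M.map (algebraMap R[X] K)).det := by
  rw [← RingHom.mapMatrix_apply, ← RingHom.map_det, isUnit_iff_ne_zero, ne_eq,
    IsFractionRing.to_map_eq_zero_iff]
  exact det_ne_zero_of_map_eval_zero_eq_one hM

theorem exists_mul_eq_of_inv_mul_eq_inv_mul {R S : Type*} [CommRing R] [CommRing S]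
    [Fintype n] [DecidableEq n] [Fintype k] {f : R →+* S} (hf : Function.Injective f)
    {A A' : Matrix n n R} {B B' : Matrix n k R} {M₁ : Matrix n n R} {M₂ : Matrix k n R}
    (hcop : A * M₁ + B * M₂ = 1) (hA : IsUnit (A.map f).det) (hA' : IsUnit (A'.map f).det)
    (htf : (A'.map f)⁻¹ * B'.map f = (A.map f)⁻¹ * B.map f) :
    ∃ U : Matrix n n R, U * A = A' ∧ U * B = B' := by
  have hB' : B'.map f = A'.map f * (A.map f)⁻¹ * B.map f := by
    rw [Matrix.mul_assoc, ← htf, mul_nonsing_inv_cancel_left _ _ hA']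
  have hU : (A' * M₁ + B' * M₂).map f = A'.map f * (A.map f)⁻¹ := by
    calc (A' * M₁ + B' * M₂).map f
        = A'.map f * (A.map f)⁻¹ * (A.map f * M₁.map f + B.map f * M₂.map f) := by
          rw [Matrix.map_add _ (map_add f), Matrix.map_mul, Matrix.map_mul, hB']
          simp only [Matrix.mul_add, Matrix.mul_assoc, nonsing_inv_mul_cancel_left _ _ hA]
      _ = A'.map f * (A.map f)⁻¹ := by
          rw [← Matrix.map_mul, ← Matrix.map_mul, ← Matrix.map_add _ (map_add f), hcop,
            Matrix.map_one _ (map_zero f) (map_one f), Matrix.mul_one]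
  refine ⟨A' * M₁ + B' * M₂, map_injective hf ?_, map_injective hf ?_⟩
  · simp only [Matrix.map_mul, hU, nonsing_inv_mul_cancel_right _ _ hA]
  · simp only [Matrix.map_mul, hU, hB']

/-- Column `j` holds the coefficients of `X ^ d j` in column `j` of `C`; for `C = [A B]` and
`d = (q, r)` this is `[A_q B_r]`. -/
def colCoeff {R : Type*} [Semiring R] (C : Matrix m k R[X]) (d : k → ℕ) : Matrix m k R :=
  of fun i j => (C i j).coeff (d j)

theorem coeff_mul_apply_add_of_natDegree_le {R : Type*} [Semiring R] [Fintype n]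
    {U : Matrix m n R[X]} {C : Matrix n k R[X]} {s : ℕ} {d : k → ℕ}
    (hU : ∀ i j, (U i j).natDegree ≤ s) (hC : ∀ i j, (C i j).natDegree ≤ d j) (i : m) (j : k) :
    ((U * C) i j).coeff (s + d j) = (U.map (coeff · s) * colCoeff C d) i j := by
  simp only [mul_apply, finsetSum_coeff, map_apply, colCoeff, of_apply]
  exact Finset.sum_congr rfl fun l _ => coeff_mul_add_eq_of_natDegree_le (hU i l) (hC l j)

theorem natDegree_eq_zero_of_rank_colCoeff_eq_card {K : Type*} [Field K] [Fintype m]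
    [Fintype n] [Fintype k] {U : Matrix m n K[X]} {C : Matrix n k K[X]} {d : k → ℕ}
    (hC : ∀ i j, (C i j).natDegree ≤ d j) (hUC : ∀ i j, ((U * C) i j).natDegree ≤ d j)
    (hrank : (colCoeff C d).rank = Fintype.card n) (i : m) (j : n) :
    (U i j).natDegree = 0 := by
  suffices ∀ s, (∀ i j, (U i j).natDegree ≤ s) → ∀ i j, (U i j).natDegree ≤ 0 from
    Nat.le_zero.mp <| this (Finset.univ.sup fun ij : m × n => (U ij.1 ij.2).natDegree)
      (fun i j => Finset.le_sup (f := fun ij : m × n => (U ij.1 ij.2).natDegree)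
        (Finset.mem_univ (i, j))) i j
  intro s
  induction s with
  | zero => exact id
  | succ s ih =>
    intro hU
    have hcoeff : U.map (coeff · (s + 1)) = 0 := by
      refine eq_zero_of_mul_eq_zero_of_rank_eq_card ?_ hrank
      ext i j
      rw [← coeff_mul_apply_add_of_natDegree_le hU hC]
      exact coeff_eq_zero_of_natDegree_lt ((hUC i j).trans_lt (by omega))
    exact ih fun i j => natDegree_le_pred (hU i j) (congrFun₂ hcoeff i j)

theorem eq_one_of_natDegree_eq_zero {R : Type*} [CommSemiring R] [Fintype n] [DecidableEq n]
    {U : Matrix n n R[X]} (hU0 : U.map (eval 0) = 1) (hU : ∀ i j, (U i j).natDegree = 0) :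
    U = 1 := by
  ext i j
  rw [eq_C_of_natDegree_eq_zero (hU i j), coeff_zero_eq_eval_zero]
  have := congrFun₂ hU0 i j
  simp only [map_apply] at this
  rw [this, one_apply, one_apply]
  split_ifs <;> simp

end Matrix

theorem stmt_6_general (m l q r : ℕ)
    (A AT : Matrix (Fin m) (Fin m) (Polynomial ℝ))
    (B BT : Matrix (Fin m) (Fin l) (Polynomial ℝ))
    (hA0 : A.map (fun p => p.eval 0) = 1)
    (hAdeg : ∀ i j, (A i j).natDegree ≤ q) (hBdeg : ∀ i j, (B i j).natDegree ≤ r)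
    (hcop : ∃ (M1 : Matrix (Fin m) (Fin m) (Polynomial ℝ))
      (M2 : Matrix (Fin l) (Fin m) (Polynomial ℝ)), A * M1 + B * M2 = 1)
    (hrank : (Matrix.fromCols (A.map fun p => p.coeff q) (B.map fun p => p.coeff r)).rank = m)
    (hATdeg : ∀ i j, (AT i j).natDegree ≤ q) (hBTdeg : ∀ i j, (BT i j).natDegree ≤ r)
    (hAT0 : AT.map (fun p => p.eval 0) = 1)
    (htf : (AT.map φR)⁻¹ * BT.map φR = (A.map φR)⁻¹ * B.map φR) :
    AT = A ∧ BT = B := by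
  obtain ⟨M1, M2, hM⟩ := hcop
  obtain ⟨U, hUA, hUB⟩ := exists_mul_eq_of_inv_mul_eq_inv_mul
    (IsFractionRing.injective ℝ[X] (RatFunc ℝ)) hM
    (isUnit_det_map_algebraMap_of_map_eval_zero_eq_one hA0)
    (isUnit_det_map_algebraMap_of_map_eval_zero_eq_one hAT0) htf
  have hU0 : U.map (eval 0) = 1 := by
    have h := congrArg (·.map (evalRingHom (0 : ℝ))) hUA
    rwa [Matrix.map_mul, coe_evalRingHom, hA0, hAT0, Matrix.mul_one] at h
  have hlead : colCoeff (fromCols A B) (Sum.elim (fun _ => q) (fun _ => r)) =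
      fromCols (A.map (coeff · q)) (B.map (coeff · r)) := by
    ext i (j | j) <;> rfl
  have hU : ∀ i j, (U i j).natDegree = 0 :=
    natDegree_eq_zero_of_rank_colCoeff_eq_card (C := fromCols A B)
      (d := Sum.elim (fun _ => q) (fun _ => r))
      (by rintro i (j | j); exacts [hAdeg i j, hBdeg i j])
      (by rintro i (j | j) <;> simp [mul_fromCols, hUA, hUB, hATdeg, hBTdeg])
      (by rw [hlead, hrank, Fintype.card_fin])
  rw [eq_one_of_natDegree_eq_zero hU0 hU, Matrix.one_mul] at hUA hUB
  exact ⟨hUA.symm, hUB.symm⟩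

/-- Sufficiency direction of identifiability of the low rank ARMAX graphical model:
if `A, B` are left coprime with `A(0) = I`, `A_q ≠ 0`, `B_r ≠ 0` and
`rank [A_q B_r] = m`, then any pair `(Ã, B̃)` of degrees at most `(q, r)` with
`Ã(0) = I` and the same transfer function equals `(A, B)`. -/
theorem stmt_6 (m l q r : ℕ)
    (A AT : Matrix (Fin m) (Fin m) (Polynomial ℝ))
    (B BT : Matrix (Fin m) (Fin l) (Polynomial ℝ))
    (hA0 : A.map (fun p => p.eval 0) = 1)
    (hAdeg : ∀ i j, (A i j).natDegree ≤ q) (hBdeg : ∀ i j, (B i j).natDegree ≤ r)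
    (hAq : A.map (fun p => p.coeff q) ≠ 0) (hBr : B.map (fun p => p.coeff r) ≠ 0)
    (hcop : ∃ (M1 : Matrix (Fin m) (Fin m) (Polynomial ℝ))
      (M2 : Matrix (Fin l) (Fin m) (Polynomial ℝ)), A * M1 + B * M2 = 1)
    (hrank : (Matrix.fromCols (A.map fun p => p.coeff q) (B.map fun p => p.coeff r)).rank = m)
    (hATdeg : ∀ i j, (AT i j).natDegree ≤ q) (hBTdeg : ∀ i j, (BT i j).natDegree ≤ r)
    (hAT0 : AT.map (fun p => p.eval 0) = 1)
    (hATinv : IsUnit (AT.map φR).det)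
    (htf : (AT.map φR)⁻¹ * BT.map φR = (A.map φR)⁻¹ * B.map φR) :
    AT = A ∧ BT = B :=
  stmt_6_general m l q r A AT B BT hA0 hAdeg hBdeg hcop hrank hATdeg hBTdeg hAT0 htf
end
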